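/- arXiv:math/0511290 — 3 statements merged into one kernel-verified Lean document; each statement's English description precedes it below -/
import Mathlib

section
/- The following three conditions are equivalent: (1) for every move z in the minimum-fiber set B_MF, every B_{|Az⁺|−1}-equivalence class of the fiber F_{Az⁺} is a singleton; (2) there exists a minimal Markov basis B such that for every z ∈ B both z⁺ and z⁻ are indispensable monomials; (3) for every minimal Markov basis B and every z ∈ B, both z⁺ and z⁻ are indispensable monomials. -/
open scoped BigOperators

section Defs

variable {ι κ : Type*} [Fintype ι]

/-- Embed a frequency vector `x ∈ ℕ^ι` into `ℤ^ι`. -/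
def natToInt (x : ι → ℕ) : ι → ℤ := fun i => (x i : ℤ)

/-- The fiber of `t`: all frequency vectors `x` with `A x = t`. -/
def fiberOf (A : Matrix κ ι ℤ) (t : κ → ℤ) : Set (ι → ℕ) :=
  {x | A.mulVec (natToInt x) = t}

/-- A move for `A`: an integer vector in the kernel of `A`. -/
def IsMove (A : Matrix κ ι ℤ) (z : ι → ℤ) : Prop := A.mulVec z = 0

/-- The positive part `z⁺` of an integer vector, as a frequency vector. -/
def posOf (z : ι → ℤ) : ι → ℕ := fun i => (z i).toNat

/-- The negative part `z⁻` of an integer vector, as a frequency vector. -/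
def negOf (z : ι → ℤ) : ι → ℕ := fun i => (-z i).toNat

/-- The degree of a move: `deg z = |z⁺|`. -/
def degOf (z : ι → ℤ) : ℕ := ∑ i, posOf z i

/-- One step: add or subtract one move of `B`, staying in `ℕ^ι`. -/
def MStep (B : Set (ι → ℤ)) (x y : ι → ℕ) : Prop :=
  ∃ z ∈ B, natToInt y = natToInt x + z ∨ natToInt y = natToInt x - z

/-- `y` is accessible from `x` by the moves of `B` (staying nonnegative throughout,
since all intermediate points are frequency vectors). -/
def Accessible (B : Set (ι → ℤ)) : (ι → ℕ) → (ι → ℕ) → Prop :=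
  Relation.ReflTransGen (MStep B)

/-- A Markov basis: a finite set of moves such that every fiber forms a single
equivalence class for mutual accessibility. -/
def IsMarkovBasis (A : Matrix κ ι ℤ) (B : Set (ι → ℤ)) : Prop :=
  B.Finite ∧ (∀ z ∈ B, IsMove A z) ∧
    ∀ t : κ → ℤ, ∀ x ∈ fiberOf A t, ∀ y ∈ fiberOf A t, Accessible B x y

/-- A minimal Markov basis: no proper subset is a Markov basis. -/
def IsMinimalMarkovBasis (A : Matrix κ ι ℤ) (B : Set (ι → ℤ)) : Prop :=
  IsMarkovBasis A B ∧ ∀ B' ⊂ B, ¬ IsMarkovBasis A B'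

/-- An indispensable monomial: every Markov basis contains a move whose
positive or negative part is `x`. -/
def IsIndispensableMonomial (A : Matrix κ ι ℤ) (x : ι → ℕ) : Prop :=
  ∀ B : Set (ι → ℤ), IsMarkovBasis A B → ∃ z ∈ B, posOf z = x ∨ negOf z = x

/-- `B_n`: the set of moves of degree at most `n`. -/
def Bmoves (A : Matrix κ ι ℤ) (n : ℕ) : Set (ι → ℤ) :=
  {z | IsMove A z ∧ degOf z ≤ n}

/-- The sample size `|t|` of a sufficient statistic `t` (well defined on nonempty
fibers under homogeneity). -/
noncomputable def sampleSize (A : Matrix κ ι ℤ) (t : κ → ℤ) : ℕ :=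
  sInf {n | ∃ x ∈ fiberOf A t, ∑ i, x i = n}

/-- The `B_{|t|-1}`-equivalence classes of the fiber of `t`. -/
noncomputable def fiberClasses (A : Matrix κ ι ℤ) (t : κ → ℤ) : Set (Set (ι → ℕ)) :=
  {C | ∃ x ∈ fiberOf A t,
    C = {y | y ∈ fiberOf A t ∧ Accessible (Bmoves A (sampleSize A t - 1)) x y}}

/-- Homogeneity: some rational vector `w` has `w ⬝ aᵢ = 1` for every column `aᵢ`. -/
def IsHomogeneousMatrix [Fintype κ] (A : Matrix κ ι ℤ) : Prop :=
  ∃ w : κ → ℚ, ∀ i : ι, ∑ j, w j * (A j i : ℚ) = 1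

end Defs

/-- The minimum-fiber set `B_MF`: nonzero moves whose positive and negative parts are
not mutually accessible by moves of lower degree. -/
def BMF {p d : ℕ} (A : Matrix (Fin d) (Fin p) ℤ) : Set (Fin p → ℤ) :=
  {z | IsMove A z ∧ z ≠ 0 ∧
    ¬ Accessible (Bmoves A (degOf z - 1)) (posOf z) (negOf z)}

/-!
Under homogeneity all points of a fiber have the same sample size `n`, so a path inside it only
uses moves of degree `≤ n`, and a move of degree exactly `n` jumps between its own two parts.
Hence a path leaving the `B_{n-1}`-class of `x` does so through a move having a part in that
class. If all classes of the fibers of `B_MF` are singletons, that part is the starting point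
itself; since a move of a minimal Markov basis lies in `B_MF` (otherwise it could be dropped),
both of its parts are indispensable. Conversely, a monomial `u` whose class contains some
`u' ≠ u` is dispensable: replacing each move joining `u` to `v` by one joining `u'` to `v` gives
another Markov basis. Minimal Markov bases exist because the Graver basis is finite (Dickson).
-/

open Matrix

variable {ι κ : Type*}

section Steps

variable {B B' : Set (ι → ℤ)} {x y : ι → ℕ} {z : ι → ℤ}

lemma natToInt_eq_natToInt_add_iff :
    natToInt y = natToInt x + z ↔ ∃ c, x = negOf z + c ∧ y = posOf z + c := by
  constructor
  · intro h
    refine ⟨fun i => x i - negOf z i, funext fun i => ?_, funext fun i => ?_⟩ <;>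
    · have := congrFun h i
      simp only [natToInt, posOf, negOf, Pi.add_apply] at this ⊢
      omega
  · rintro ⟨c, rfl, rfl⟩
    funext i
    simp only [natToInt, posOf, negOf, Pi.add_apply]
    omega

lemma natToInt_injective : Function.Injective (natToInt : (ι → ℕ) → ι → ℤ) :=
  fun _ _ h => funext fun i => Nat.cast_injective (R := ℤ) (congrFun h i)

lemma natToInt_posOf (z : ι → ℤ) : natToInt (posOf z) = natToInt (negOf z) + z :=
  natToInt_eq_natToInt_add_iff.2 ⟨0, by simp, by simp⟩

lemma mStep_iff : MStep B x y ↔ ∃ z ∈ B, ∃ c,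
    (x = negOf z + c ∧ y = posOf z + c) ∨ (y = negOf z + c ∧ x = posOf z + c) := by
  have h_sub : ∀ z, natToInt y = natToInt x - z ↔ natToInt x = natToInt y + z := fun z => by
    rw [eq_sub_iff_add_eq, eq_comm]
  simp only [MStep, h_sub, natToInt_eq_natToInt_add_iff, exists_or]

lemma MStep.symm (h : MStep B x y) : MStep B y x := by
  obtain ⟨z, hz, h | h⟩ := h
  · exact ⟨z, hz, Or.inr (by rw [h]; ring)⟩
  · exact ⟨z, hz, Or.inl (by rw [h]; ring)⟩

lemma MStep.add_right (c : ι → ℕ) (h : MStep B x y) : MStep B (x + c) (y + c) := by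
  obtain ⟨z, hz, c', h | h⟩ := mStep_iff.1 h <;>
  · rw [h.1, h.2, add_assoc, add_assoc]
    exact mStep_iff.2 ⟨z, hz, c' + c, by simp⟩

lemma Accessible.symm (h : Accessible B x y) : Accessible B y x := by
  induction h with
  | refl => exact .refl
  | tail _ hstep ih => exact .head hstep.symm ih

lemma Accessible.add_right (c : ι → ℕ) (h : Accessible B x y) :
    Accessible B (x + c) (y + c) :=
  Relation.ReflTransGen.lift (· + c) (fun _ _ => MStep.add_right c) _ _ h

lemma Accessible.mono (hBB' : B ⊆ B') (h : Accessible B x y) : Accessible B' x y :=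
  Relation.ReflTransGen.mono (fun _ _ ⟨z, hz, hxy⟩ => ⟨z, hBB' hz, hxy⟩) _ _ h

lemma accessible_negOf_posOf (hz : z ∈ B) : Accessible B (negOf z) (posOf z) := by
  have : MStep B (negOf z + 0) (posOf z + 0) := mStep_iff.2 ⟨z, hz, 0, Or.inl ⟨rfl, rfl⟩⟩
  exact .single (by simpa using this)

lemma Accessible.of_forall_accessible (hB : ∀ z ∈ B, Accessible B' (negOf z) (posOf z))
    (h : Accessible B x y) : Accessible B' x y := by
  refine Relation.ReflTransGen.lift' id (fun a b hab => ?_) _ _ h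
  obtain ⟨z, hz, c, h | h⟩ := mStep_iff.1 hab <;> simp only [Function.onFun, id, h.1, h.2]
  · exact (hB z hz).add_right c
  · exact ((hB z hz).add_right c).symm

end Steps

section Homogeneous

variable [Fintype ι] {A : Matrix κ ι ℤ} {B B' : Set (ι → ℤ)} {x y : ι → ℕ} {z : ι → ℤ}

lemma IsMove.mulVec_posOf (hz : IsMove A z) :
    A *ᵥ natToInt (posOf z) = A *ᵥ natToInt (negOf z) := by
  rw [natToInt_posOf, mulVec_add, hz, add_zero]

lemma MStep.mulVec_eq (hB : ∀ z ∈ B, IsMove A z) (h : MStep B x y) :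
    A *ᵥ natToInt y = A *ᵥ natToInt x := by
  obtain ⟨z, hz, h | h⟩ := h <;>
  · have hz' : A *ᵥ z = 0 := hB z hz
    simp [h, mulVec_add, mulVec_sub, hz']

lemma Accessible.mulVec_eq (hB : ∀ z ∈ B, IsMove A z) (h : Accessible B x y) :
    A *ᵥ natToInt y = A *ᵥ natToInt x := by
  induction h with
  | refl => rfl
  | tail _ hstep ih => rw [MStep.mulVec_eq hB hstep, ih]

variable [Fintype κ]

lemma IsHomogeneousMatrix.sum_eq_of_mulVec_eq (hA : IsHomogeneousMatrix A)
    (h : A *ᵥ natToInt x = A *ᵥ natToInt y) : ∑ i, x i = ∑ i, y i := by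
  obtain ⟨w, hw⟩ := hA
  -- `w ⬝ A x = ∑ᵢ (w ⬝ aᵢ) xᵢ = |x|`
  have weight : ∀ x : ι → ℕ, ∑ j, w j * ((A *ᵥ natToInt x) j : ℚ) = ∑ i, (x i : ℚ) := by
    intro x
    simp only [Matrix.mulVec, dotProduct, natToInt, Int.cast_sum, Int.cast_mul,
      Int.cast_natCast, Finset.mul_sum]
    rw [Finset.sum_comm]
    refine Finset.sum_congr rfl fun i _ => ?_
    calc ∑ j, w j * ((A j i : ℚ) * x i) = (∑ j, w j * A j i) * x i := by
          rw [Finset.sum_mul]; exact Finset.sum_congr rfl fun j _ => by ring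
      _ = x i := by rw [hw i, one_mul]
  have : ∑ i, (x i : ℚ) = ∑ i, (y i : ℚ) := by rw [← weight, ← weight, h]
  exact_mod_cast this

lemma IsHomogeneousMatrix.sum_negOf (hA : IsHomogeneousMatrix A) (hz : IsMove A z) :
    ∑ i, negOf z i = degOf z :=
  (hA.sum_eq_of_mulVec_eq hz.mulVec_posOf).symm

lemma Accessible.sum_eq (hA : IsHomogeneousMatrix A) (hB : ∀ z ∈ B, IsMove A z)
    (h : Accessible B x y) : ∑ i, y i = ∑ i, x i :=
  hA.sum_eq_of_mulVec_eq (h.mulVec_eq hB)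

lemma IsHomogeneousMatrix.sampleSize_eq (hA : IsHomogeneousMatrix A) {t : κ → ℤ}
    (hx : x ∈ fiberOf A t) : sampleSize A t = ∑ i, x i := by
  have : {n | ∃ y ∈ fiberOf A t, ∑ i, y i = n} = {∑ i, x i} := by
    ext n
    exact ⟨fun ⟨y, hy, hn⟩ => hn ▸ hA.sum_eq_of_mulVec_eq (hy.trans hx.symm),
      fun hn => ⟨x, hx, hn.symm⟩⟩
  rw [sampleSize, this, csInf_singleton]

lemma IsHomogeneousMatrix.posOf_eq_negOf_of_degOf_eq_zero (hA : IsHomogeneousMatrix A)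
    (hz : IsMove A z) (h0 : degOf z = 0) : posOf z = negOf z := by
  have hneg := hA.sum_negOf hz
  rw [h0, Finset.sum_eq_zero_iff] at hneg
  rw [degOf, Finset.sum_eq_zero_iff] at h0
  funext i
  rw [h0 i (Finset.mem_univ i), hneg i (Finset.mem_univ i)]


lemma IsHomogeneousMatrix.sum_eq_degOf_add (hA : IsHomogeneousMatrix A) (hz : IsMove A z)
    {c : ι → ℕ} (hx : x = negOf z + c ∨ x = posOf z + c) :
    ∑ i, x i = degOf z + ∑ i, c i := by
  rcases hx with rfl | rfl <;> simp only [Pi.add_apply, Finset.sum_add_distrib]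
  · rw [hA.sum_negOf hz]
  · rfl

lemma MStep.restrict_degOf (hA : IsHomogeneousMatrix A) (hB : ∀ z ∈ B, IsMove A z)
    (h : MStep B x y) : MStep {z ∈ B | degOf z ≤ ∑ i, x i} x y := by
  obtain ⟨z, hz, c, hxy⟩ := mStep_iff.1 h
  have hdeg := hA.sum_eq_degOf_add (hB z hz) (hxy.imp And.left And.right)
  exact mStep_iff.2 ⟨z, ⟨hz, by omega⟩, c, hxy⟩

lemma MStep.restrict_degOf_lt_or (hA : IsHomogeneousMatrix A) (hB : ∀ z ∈ B, IsMove A z)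
    (h : MStep B x y) :
    MStep {z ∈ B | degOf z < ∑ i, x i} x y ∨ ∃ z ∈ B, posOf z = x ∨ negOf z = x := by
  obtain ⟨z, hz, c, hxy⟩ := mStep_iff.1 h
  have hx := hxy.imp And.left And.right
  have hdeg := hA.sum_eq_degOf_add (hB z hz) hx
  by_cases hc : ∑ i, c i = 0
  · have : c = 0 := funext fun i => Finset.sum_eq_zero_iff.1 hc i (Finset.mem_univ i)
    subst this
    exact Or.inr ⟨z, hz, by simpa only [add_zero, eq_comm, or_comm] using hx⟩
  · exact Or.inl (mStep_iff.2 ⟨z, ⟨hz, by omega⟩, c, hxy⟩)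

lemma Accessible.restrict_degOf (hA : IsHomogeneousMatrix A) (hB : ∀ z ∈ B, IsMove A z)
    (h : Accessible B x y) : Accessible {z ∈ B | degOf z ≤ ∑ i, x i} x y := by
  induction h with
  | refl => exact .refl
  | tail hab hbc ih =>
    have hstep := MStep.restrict_degOf hA hB hbc
    rw [Accessible.sum_eq hA hB hab] at hstep
    exact ih.tail hstep

lemma IsMarkovBasis.accessible_of_accessible_bmoves (hA : IsHomogeneousMatrix A)
    (hB : IsMarkovBasis A B) {m : ℕ} (hsub : ∀ e ∈ B, degOf e ≤ m → e ∈ B')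
    (h : Accessible (Bmoves A m) x y) : Accessible B' x y := by
  refine h.of_forall_accessible fun f hfm => ?_
  obtain ⟨hf, hfm⟩ := hfm
  have hpath := (hB.2.2 _ (negOf f) rfl (posOf f) hf.mulVec_posOf).restrict_degOf hA hB.2.1
  rw [hA.sum_negOf hf] at hpath
  exact hpath.mono fun e he => hsub e he.1 (he.2.trans hfm)

lemma IsMarkovBasis.diff_singleton (hA : IsHomogeneousMatrix A) (hB : IsMarkovBasis A B)
    (hz : Accessible (Bmoves A (degOf z - 1)) (posOf z) (negOf z)) :
    IsMarkovBasis A (B \ {z}) := by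
  refine ⟨hB.1.sdiff, fun e he => hB.2.1 e he.1, fun t x hx y hy =>
    (hB.2.2 t x hx y hy).of_forall_accessible fun e he => ?_⟩
  by_cases hez : e = z
  · subst hez
    by_cases h0 : degOf e = 0
    · rw [hA.posOf_eq_negOf_of_degOf_eq_zero (hB.2.1 e he) h0]
      exact .refl
    · refine (hB.accessible_of_accessible_bmoves hA (B' := B \ {e})
        (fun f hf hfe => ⟨hf, ?_⟩) hz).symm
      rintro rfl
      omega
  · exact accessible_negOf_posOf ⟨he, hez⟩

lemma Accessible.exists_part_accessible_bmoves (hA : IsHomogeneousMatrix A)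
    (hB : ∀ z ∈ B, IsMove A z) (h : Accessible B x y)
    (hy : ¬ Accessible (Bmoves A (∑ i, x i - 1)) x y) :
    ∃ z ∈ B, ∃ u, Accessible (Bmoves A (∑ i, x i - 1)) x u ∧ (posOf z = u ∨ negOf z = u) := by
  induction h with
  | refl => exact absurd .refl hy
  | @tail b _ hab hbc ih =>
    by_cases hb : Accessible (Bmoves A (∑ i, x i - 1)) x b
    · have hsum := hb.sum_eq hA fun _ hz => hz.1
      rcases MStep.restrict_degOf_lt_or hA hB hbc with ⟨e, ⟨he, hde⟩, hstep⟩ | ⟨z, hz, hzb⟩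
      · exact absurd (hb.tail ⟨e, ⟨hB e he, by omega⟩, hstep⟩) hy
      · exact ⟨z, hz, b, hb, hzb⟩
    · exact ih hb

end Homogeneous

section Graver

variable [Fintype ι] {A : Matrix κ ι ℤ} {x y : ι → ℕ} {z : ι → ℤ}

def graverBasis (A : Matrix κ ι ℤ) : Set (ι → ℤ) :=
  {g | IsMove A g ∧ g ≠ 0 ∧
    ∀ z, IsMove A z → z ≠ 0 → ¬ (posOf z, negOf z) < (posOf g, negOf g)}

lemma graverBasis_finite : (graverBasis A).Finite := by
  have hinj : Function.Injective fun z : ι → ℤ => (posOf z, negOf z) := fun z z' h => by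
    simp only [Prod.mk.injEq] at h
    obtain ⟨hpos, hneg⟩ := h
    rw [← add_right_inj (natToInt (negOf z)), ← natToInt_posOf, hpos, hneg, natToInt_posOf]
  refine Set.Finite.of_finite_image (WellQuasiOrderedLE.finite_of_isAntichain ?_) hinj.injOn
  rintro _ ⟨g, hg, rfl⟩ _ ⟨g', hg', rfl⟩ hne hle
  exact hg'.2.2 g hg.1 hg.2.1 (lt_of_le_of_ne hle hne)

lemma exists_mem_graverBasis_le (hz : IsMove A z) (hz0 : z ≠ 0) :
    ∃ g ∈ graverBasis A, posOf g ≤ posOf z ∧ negOf g ≤ negOf z := by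
  obtain ⟨g, ⟨hg, hg0, hgz⟩, hmin⟩ :=
    (InvImage.wf (fun z : ι → ℤ => (posOf z, negOf z)) wellFounded_lt).has_min
      {g | IsMove A g ∧ g ≠ 0 ∧ (posOf g, negOf g) ≤ (posOf z, negOf z)} ⟨z, hz, hz0, le_rfl⟩
  exact ⟨g, ⟨hg, hg0, fun g' hg' hg'0 hlt => hmin g' ⟨hg', hg'0, hlt.le.trans hgz⟩ hlt⟩,
    Prod.mk_le_mk.1 hgz⟩

lemma accessible_graverBasis (h : A *ᵥ natToInt x = A *ᵥ natToInt y) :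
    Accessible (graverBasis A) x y := by
  induction hn : ∑ i, ((natToInt y - natToInt x) i).natAbs using Nat.strong_induction_on
    generalizing x with
  | _ n ih =>
  by_cases hxy : x = y
  · exact hxy ▸ .refl
  set z := natToInt y - natToInt x
  have hz : IsMove A z := by simp only [IsMove, z, mulVec_sub, h, sub_self]
  have hz0 : z ≠ 0 := fun h0 => hxy (natToInt_injective (sub_eq_zero.1 h0).symm)
  obtain ⟨g, hg, hgz⟩ := exists_mem_graverBasis_le hz hz0
  -- `g` is sign-compatible with `z = y - x`, so `x + g ≥ 0` and `|y - (x + g)| = |z| - |g|`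
  have hcoord : ∀ i, (g i).toNat ≤ (z i).toNat ∧ (-g i).toNat ≤ (-z i).toNat :=
    fun i => ⟨hgz.1 i, hgz.2 i⟩
  obtain ⟨x', hx'⟩ : ∃ x', natToInt x' = natToInt x + g :=
    ⟨fun i => (x i + g i).toNat, funext fun i => by
      have := hcoord i
      simp only [natToInt, z, Pi.sub_apply, Pi.add_apply] at this ⊢
      omega⟩
  have hstep : MStep (graverBasis A) x x' := ⟨g, hg, Or.inl hx'⟩
  have habs : ∀ i, ((natToInt y - natToInt x') i).natAbs + (g i).natAbs = (z i).natAbs := by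
    intro i
    have := hcoord i
    have hx'i := congrFun hx' i
    simp only [natToInt, z, Pi.sub_apply, Pi.add_apply] at this hx'i ⊢
    omega
  have hg_pos : 0 < ∑ i, (g i).natAbs := by
    obtain ⟨i, hi⟩ := Function.ne_iff.1 hg.2.1
    exact Finset.sum_pos' (fun _ _ => Nat.zero_le _) ⟨i, Finset.mem_univ i, Int.natAbs_pos.2 hi⟩
  have hsum : ∑ i, ((natToInt y - natToInt x') i).natAbs + ∑ i, (g i).natAbs = n := by
    rw [← hn, ← Finset.sum_add_distrib]
    exact Finset.sum_congr rfl fun i _ => habs i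
  refine .head hstep (ih _ ?_ ((MStep.mulVec_eq (fun _ hg => hg.1) hstep).trans h) rfl)
  omega

lemma exists_isMarkovBasis (A : Matrix κ ι ℤ) : ∃ B, IsMarkovBasis A B :=
  ⟨graverBasis A, graverBasis_finite, fun _ hg => hg.1,
    fun _ _ hx _ hy => accessible_graverBasis (hx.trans hy.symm)⟩

lemma exists_isMinimalMarkovBasis (A : Matrix κ ι ℤ) : ∃ B, IsMinimalMarkovBasis A B := by
  obtain ⟨B₀, hB₀⟩ := exists_isMarkovBasis A
  obtain ⟨B, hB, hmin⟩ := (measure Set.ncard).wf.has_min {B | IsMarkovBasis A B} ⟨B₀, hB₀⟩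
  exact ⟨B, hB, fun B' hB'B hB' => hmin B' hB' (Set.ncard_lt_ncard hB'B hB.1)⟩

end Graver

section Replacement

lemma eq_of_le_of_sum_eq [Fintype ι] {M : Type*} [AddCommMonoid M] [PartialOrder M]
    [IsOrderedCancelAddMonoid M] {f g : ι → M} (hle : f ≤ g) (hsum : ∑ i, f i = ∑ i, g i) :
    f = g :=
  funext fun i => (Finset.sum_eq_sum_iff_of_le fun i _ => hle i).1 hsum i (Finset.mem_univ i)

lemma posOf_natToInt_sub_le (a b : ι → ℕ) : posOf (natToInt a - natToInt b) ≤ a :=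
  fun i => by simp only [posOf, natToInt, Pi.sub_apply]; omega

lemma negOf_natToInt_sub_le (a b : ι → ℕ) : negOf (natToInt a - natToInt b) ≤ b :=
  fun i => by simp only [negOf, natToInt, Pi.sub_apply]; omega

def partnersOf (B : Set (ι → ℤ)) (u : ι → ℕ) : Set (ι → ℕ) :=
  {v | v ≠ u ∧ ∃ z ∈ B, (posOf z = u ∧ negOf z = v) ∨ (negOf z = u ∧ posOf z = v)}

def replaceMoves (B : Set (ι → ℤ)) (u u' : ι → ℕ) : Set (ι → ℤ) :=
  {z ∈ B | posOf z ≠ u ∧ negOf z ≠ u} ∪ (fun v => natToInt u' - natToInt v) '' partnersOf B u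

variable {A : Matrix κ ι ℤ} {B : Set (ι → ℤ)} {u u' v : ι → ℕ} {z : ι → ℤ}

lemma Set.Finite.partnersOf (hB : B.Finite) : (partnersOf B u).Finite := by
  refine ((hB.image negOf).union (hB.image posOf)).subset ?_
  rintro v ⟨-, z, hz, ⟨-, rfl⟩ | ⟨-, rfl⟩⟩
  exacts [Or.inl ⟨z, hz, rfl⟩, Or.inr ⟨z, hz, rfl⟩]

variable [Fintype ι]

lemma mulVec_eq_of_mem_partnersOf (hB : ∀ z ∈ B, IsMove A z) (hv : v ∈ partnersOf B u) :
    A *ᵥ natToInt v = A *ᵥ natToInt u := by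
  obtain ⟨-, z, hz, ⟨rfl, rfl⟩ | ⟨rfl, rfl⟩⟩ := hv
  exacts [(hB z hz).mulVec_posOf.symm, (hB z hz).mulVec_posOf]

variable [Fintype κ]

lemma parts_ne_of_mem_replaceMoves (hA : IsHomogeneousMatrix A) (hB : ∀ z ∈ B, IsMove A z)
    (hne : u ≠ u') (hsum : ∑ i, u' i = ∑ i, u i) (hz : z ∈ replaceMoves B u u') :
    posOf z ≠ u ∧ negOf z ≠ u := by
  obtain ⟨-, hz⟩ | ⟨v, hv, rfl⟩ := hz
  · exact hz
  have hv_sum := hA.sum_eq_of_mulVec_eq (mulVec_eq_of_mem_partnersOf hB hv)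
  constructor
  · rintro hpos
    exact hne (eq_of_le_of_sum_eq (hpos ▸ posOf_natToInt_sub_le u' v) hsum.symm)
  · rintro hneg
    exact hv.1 (eq_of_le_of_sum_eq (hneg ▸ negOf_natToInt_sub_le u' v) hv_sum.symm).symm

lemma isMarkovBasis_replaceMoves (hA : IsHomogeneousMatrix A) (hB : IsMarkovBasis A B)
    (hne : u ≠ u') (h : Accessible (Bmoves A (∑ i, u i - 1)) u u') :
    IsMarkovBasis A (replaceMoves B u u') := by
  have hu_pos : 0 < ∑ i, u i := by
    have hsum := h.sum_eq hA fun _ hz => hz.1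
    refine Nat.pos_of_ne_zero fun h0 => hne ?_
    have hzero : ∀ w : ι → ℕ, ∑ i, w i = 0 → w = 0 := fun w hw =>
      funext fun i => Finset.sum_eq_zero_iff.1 hw i (Finset.mem_univ i)
    rw [hzero u h0, hzero u' (hsum.trans h0)]
  have hu'u : Accessible (replaceMoves B u u') u' u := by
    refine (hB.accessible_of_accessible_bmoves hA (fun e he hde => Or.inl ⟨he, ?_, ?_⟩) h).symm
    · rintro rfl
      exact absurd hde (by unfold degOf; omega)
    · rintro rfl
      exact absurd hde (by rw [← hA.sum_negOf (hB.2.1 e he)]; omega)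
  have hpartner : ∀ v ∈ partnersOf B u, Accessible (replaceMoves B u u') v u := fun v hv =>
    .head ⟨_, Or.inr ⟨v, hv, rfl⟩, Or.inl (add_sub_cancel _ _).symm⟩ hu'u
  refine ⟨(hB.1.sep _).union (hB.1.partnersOf.image _), ?_, fun t x hx y hy =>
    (hB.2.2 t x hx y hy).of_forall_accessible fun z hz => ?_⟩
  · rintro _ (⟨hz, -⟩ | ⟨v, hv, rfl⟩)
    · exact hB.2.1 _ hz
    · rw [IsMove, mulVec_sub, mulVec_eq_of_mem_partnersOf hB.2.1 hv, h.mulVec_eq fun _ hz => hz.1,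
        sub_self]
  by_cases hpos : posOf z = u <;> by_cases hneg : negOf z = u
  · rw [hpos, hneg]
    exact .refl
  · exact hpos ▸ hpartner _ ⟨hneg, z, hz, Or.inl ⟨hpos, rfl⟩⟩
  · exact hneg ▸ (hpartner _ ⟨hpos, z, hz, Or.inr ⟨hneg, rfl⟩⟩).symm
  · exact accessible_negOf_posOf (Or.inl ⟨hz, hpos, hneg⟩)

lemma IsIndispensableMonomial.eq_of_accessible (hA : IsHomogeneousMatrix A)
    (hu : IsIndispensableMonomial A u) (h : Accessible (Bmoves A (∑ i, u i - 1)) u u') :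
    u' = u := by
  by_contra hne
  obtain ⟨B, hB⟩ := exists_isMarkovBasis A
  obtain ⟨z, hz, hzu⟩ := hu _ (isMarkovBasis_replaceMoves hA hB (Ne.symm hne) h)
  have := parts_ne_of_mem_replaceMoves hA hB.2.1 (Ne.symm hne) (h.sum_eq hA fun _ hz => hz.1) hz
  exact hzu.elim this.1 this.2

end Replacement

section Classes

variable [Fintype ι] [Fintype κ] {A : Matrix κ ι ℤ} {B : Set (ι → ℤ)} {x y w : ι → ℕ}

lemma fiberClasses_singleton_iff (hA : IsHomogeneousMatrix A) (t : κ → ℤ) :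
    (∀ C ∈ fiberClasses A t, ∃ x, C = {x}) ↔
      ∀ x ∈ fiberOf A t, ∀ y, Accessible (Bmoves A (∑ i, x i - 1)) x y → y = x := by
  constructor
  · intro h x hx y hxy
    obtain ⟨c, hc⟩ := h _ ⟨x, hx, rfl⟩
    rw [hA.sampleSize_eq hx] at hc
    have hmem : ∀ w ∈ fiberOf A t, Accessible (Bmoves A (∑ i, x i - 1)) x w → w = c :=
      fun w hw hxw => by rw [← Set.mem_singleton_iff, ← hc]; exact ⟨hw, hxw⟩
    rw [hmem y ((hxy.mulVec_eq fun _ hz => hz.1).trans hx) hxy, hmem x hx .refl]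
  · rintro h C ⟨x, hx, rfl⟩
    rw [hA.sampleSize_eq hx]
    exact ⟨x, Set.ext fun y => ⟨fun hy => h x hx y hy.2, by rintro rfl; exact ⟨hx, .refl⟩⟩⟩

lemma isIndispensableMonomial_of_forall_accessible_eq (hA : IsHomogeneousMatrix A)
    (hx : ∀ y, Accessible (Bmoves A (∑ i, x i - 1)) x y → y = x)
    (hy : A *ᵥ natToInt y = A *ᵥ natToInt x) (hyx : y ≠ x) : IsIndispensableMonomial A x := by
  intro B hB
  obtain ⟨z, hz, u, hxu, hzu⟩ :=
    (hB.2.2 _ x rfl y hy).exists_part_accessible_bmoves hA hB.2.1 fun h => hyx (hx y h)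
  exact ⟨z, hz, hx u hxu ▸ hzu⟩

lemma eq_of_accessible_of_parts_indispensable (hA : IsHomogeneousMatrix A)
    (hB : IsMarkovBasis A B)
    (hind : ∀ g ∈ B, IsIndispensableMonomial A (posOf g) ∧ IsIndispensableMonomial A (negOf g))
    (hw : A *ᵥ natToInt w = A *ᵥ natToInt x) (hxw : ¬ Accessible (Bmoves A (∑ i, x i - 1)) x w)
    (hxy : Accessible (Bmoves A (∑ i, x i - 1)) x y) : y = x := by
  obtain ⟨g, hg, u, hxu, hgu⟩ :=
    (hB.2.2 _ x rfl w hw).exists_part_accessible_bmoves hA hB.2.1 hxw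
  have hu : IsIndispensableMonomial A u := hgu.elim (· ▸ (hind g hg).1) (· ▸ (hind g hg).2)
  have hsum : ∑ i, u i = ∑ i, x i := hxu.sum_eq hA fun _ hz => hz.1
  rw [← hsum] at hxu hxy
  rw [hu.eq_of_accessible hA (hxu.symm.trans hxy), hu.eq_of_accessible hA hxu.symm]

end Classes

section MinimumFiber

variable {p d : ℕ} {A : Matrix (Fin d) (Fin p) ℤ} {B : Set (Fin p → ℤ)} {x : Fin p → ℕ}
  {z : Fin p → ℤ}

lemma IsMinimalMarkovBasis.mem_BMF (hA : IsHomogeneousMatrix A) (hB : IsMinimalMarkovBasis A B)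
    (hz : z ∈ B) : z ∈ BMF A := by
  have hz_not : ¬ Accessible (Bmoves A (degOf z - 1)) (posOf z) (negOf z) := fun h =>
    hB.2 _ (Set.sdiff_singleton_ssubset.2 hz) (hB.1.diff_singleton hA h)
  refine ⟨hB.1.2.1 z hz, ?_, hz_not⟩
  rintro rfl
  exact hz_not ((show posOf (0 : Fin p → ℤ) = negOf 0 by ext; simp [posOf, negOf]) ▸ .refl)

lemma isIndispensableMonomial_parts_of_mem_BMF (hA : IsHomogeneousMatrix A) (hz : z ∈ BMF A)
    (hiso : ∀ x ∈ fiberOf A (A *ᵥ natToInt (posOf z)), ∀ y,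
      Accessible (Bmoves A (∑ i, x i - 1)) x y → y = x) :
    IsIndispensableMonomial A (posOf z) ∧ IsIndispensableMonomial A (negOf z) := by
  have hne : negOf z ≠ posOf z := fun h => hz.2.2 (h ▸ .refl)
  have hfib : A *ᵥ natToInt (negOf z) = A *ᵥ natToInt (posOf z) := hz.1.mulVec_posOf.symm
  exact ⟨isIndispensableMonomial_of_forall_accessible_eq hA (hiso _ rfl) hfib hne,
    isIndispensableMonomial_of_forall_accessible_eq hA (hiso _ hfib) hfib.symm hne.symm⟩

lemma exists_not_accessible_of_mem_BMF (hA : IsHomogeneousMatrix A) (hz : z ∈ BMF A)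
    (hx : x ∈ fiberOf A (A *ᵥ natToInt (posOf z))) :
    ∃ w, A *ᵥ natToInt w = A *ᵥ natToInt (posOf z) ∧
      ¬ Accessible (Bmoves A (∑ i, x i - 1)) x w := by
  have hdeg : ∑ i, x i = degOf z := hA.sum_eq_of_mulVec_eq hx
  by_cases hpos : Accessible (Bmoves A (∑ i, x i - 1)) x (posOf z)
  · refine ⟨negOf z, hz.1.mulVec_posOf.symm, fun hneg => hz.2.2 ?_⟩
    rw [← hdeg]
    exact hpos.symm.trans hneg
  · exact ⟨posOf z, rfl, hpos⟩

theorem forall_parts_indispensable_of_forall_classes_singleton (hA : IsHomogeneousMatrix A)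
    (h : ∀ z ∈ BMF A, ∀ C ∈ fiberClasses A (A *ᵥ natToInt (posOf z)), ∃ x, C = {x})
    (B : Set (Fin p → ℤ)) (hB : IsMinimalMarkovBasis A B) :
    ∀ z ∈ B, IsIndispensableMonomial A (posOf z) ∧ IsIndispensableMonomial A (negOf z) :=
  fun z hz =>
    have hzMF := hB.mem_BMF hA hz
    isIndispensableMonomial_parts_of_mem_BMF hA hzMF
      ((fiberClasses_singleton_iff hA _).1 (h z hzMF))

theorem forall_classes_singleton_of_parts_indispensable (hA : IsHomogeneousMatrix A)
    (hB : IsMarkovBasis A B)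
    (hind : ∀ g ∈ B, IsIndispensableMonomial A (posOf g) ∧ IsIndispensableMonomial A (negOf g)) :
    ∀ z ∈ BMF A, ∀ C ∈ fiberClasses A (A *ᵥ natToInt (posOf z)), ∃ x, C = {x} :=
  fun _ hz => (fiberClasses_singleton_iff hA _).2 fun _ hx _ hxy =>
    have ⟨_, hw, hxw⟩ := exists_not_accessible_of_mem_BMF hA hz hx
    eq_of_accessible_of_parts_indispensable hA hB hind (hw.trans hx.symm) hxw hxy

end MinimumFiber

theorem all_classes_singleton_iff_all_monomials_indispensable_general
    {p d : ℕ}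
    (A : Matrix (Fin d) (Fin p) ℤ) (hA : IsHomogeneousMatrix A) :
    ((∀ z ∈ BMF A, ∀ C ∈ fiberClasses A (A.mulVec (natToInt (posOf z))),
        ∃ x : Fin p → ℕ, C = {x}) ↔
      (∃ B : Set (Fin p → ℤ), IsMinimalMarkovBasis A B ∧ ∀ z ∈ B,
        IsIndispensableMonomial A (posOf z) ∧ IsIndispensableMonomial A (negOf z))) ∧
    ((∃ B : Set (Fin p → ℤ), IsMinimalMarkovBasis A B ∧ ∀ z ∈ B,
        IsIndispensableMonomial A (posOf z) ∧ IsIndispensableMonomial A (negOf z)) ↔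
      (∀ B : Set (Fin p → ℤ), IsMinimalMarkovBasis A B → ∀ z ∈ B,
        IsIndispensableMonomial A (posOf z) ∧ IsIndispensableMonomial A (negOf z))) := by
  obtain ⟨B₀, hB₀⟩ := exists_isMinimalMarkovBasis A
  have one_imp_three := forall_parts_indispensable_of_forall_classes_singleton hA
  have two_imp_one := fun (B : Set (Fin p → ℤ)) (hB : IsMinimalMarkovBasis A B) =>
    forall_classes_singleton_of_parts_indispensable hA hB.1
  exact ⟨⟨fun h1 => ⟨B₀, hB₀, one_imp_three h1 B₀ hB₀⟩, fun ⟨B, hB, hind⟩ => two_imp_one B hB hind⟩,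
    fun ⟨B, hB, hind⟩ => one_imp_three (two_imp_one B hB hind), fun h3 => ⟨B₀, hB₀, h3 B₀ hB₀⟩⟩

/-- all equivalence classes of all fibers of `B_MF` are singletons iff
some minimal Markov basis consists of moves with both parts indispensable monomials,
iff every minimal Markov basis does. -/
theorem all_classes_singleton_iff_all_monomials_indispensable
    {p d : ℕ} (hp : 0 < p) (hd : 0 < d)
    (A : Matrix (Fin d) (Fin p) ℤ) (hA : IsHomogeneousMatrix A) :
    ((∀ z ∈ BMF A, ∀ C ∈ fiberClasses A (A.mulVec (natToInt (posOf z))),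
        ∃ x : Fin p → ℕ, C = {x}) ↔
      (∃ B : Set (Fin p → ℤ), IsMinimalMarkovBasis A B ∧ ∀ z ∈ B,
        IsIndispensableMonomial A (posOf z) ∧ IsIndispensableMonomial A (negOf z))) ∧
    ((∃ B : Set (Fin p → ℤ), IsMinimalMarkovBasis A B ∧ ∀ z ∈ B,
        IsIndispensableMonomial A (posOf z) ∧ IsIndispensableMonomial A (negOf z)) ↔
      (∀ B : Set (Fin p → ℤ), IsMinimalMarkovBasis A B → ∀ z ∈ B,
        IsIndispensableMonomial A (posOf z) ∧ IsIndispensableMonomial A (negOf z))) :=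
  all_classes_singleton_iff_all_monomials_indispensable_general A hA
end

section
/- If a finite set B of moves is 1-norm reducing, then B is a Markov basis. -/
open scoped BigOperators

/-- A set of moves `B` is 1-norm reducing: for distinct `x, y` in a common fiber, some
`z ∈ B` applied with sign `ε` to `x` or to `y` strictly decreases the ℓ¹ distance. -/
def IsNormReducing {ι κ : Type*} [Fintype ι] (A : Matrix κ ι ℤ) (B : Set (ι → ℤ)) :
    Prop :=
  ∀ t : κ → ℤ, ∀ x ∈ fiberOf A t, ∀ y ∈ fiberOf A t, x ≠ y →
    ∃ z ∈ B, ∃ ε : ℤ, (ε = 1 ∨ ε = -1) ∧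
      (((∀ i, 0 ≤ natToInt x i + ε * z i) ∧
          ∑ i, |natToInt x i + ε * z i - natToInt y i| <
            ∑ i, |natToInt x i - natToInt y i|) ∨
        ((∀ i, 0 ≤ natToInt y i + ε * z i) ∧
          ∑ i, |natToInt x i - (natToInt y i + ε * z i)| <
            ∑ i, |natToInt x i - natToInt y i|))

/-- a 1-norm reducing finite set of moves is a Markov basis. -/
theorem normReducing_isMarkovBasis
    {p d : ℕ} (hp : 0 < p) (hd : 0 < d)
    (A : Matrix (Fin d) (Fin p) ℤ) (hA : IsHomogeneousMatrix A)
    (B : Set (Fin p → ℤ)) (hBfin : B.Finite) (hBmoves : ∀ b ∈ B, IsMove A b)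
    (hB : IsNormReducing A B) :
    IsMarkovBasis A B := by
  refine ⟨hBfin, hBmoves, ?_⟩
  intro t
  -- key step lemma: move a fiber point by ε * z
  have step : ∀ z ∈ B, ∀ ε : ℤ, (ε = 1 ∨ ε = -1) → ∀ v ∈ fiberOf A t,
      (∀ i, 0 ≤ natToInt v i + ε * z i) →
      ∃ v' : Fin p → ℕ, v' ∈ fiberOf A t ∧ MStep B v v' ∧
        natToInt v' = fun i => natToInt v i + ε * z i := by
    intro z hzB ε hε v hv hnn
    have key : (natToInt fun i => (natToInt v i + ε * z i).toNat)
        = fun i => natToInt v i + ε * z i := by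
      funext i
      exact Int.toNat_of_nonneg (hnn i)
    refine ⟨fun i => (natToInt v i + ε * z i).toNat, ?_, ?_, key⟩
    · have hmove := hBmoves z hzB
      show A.mulVec (natToInt fun i => (natToInt v i + ε * z i).toNat) = t
      have h1 : (natToInt fun i => (natToInt v i + ε * z i).toNat)
          = natToInt v + ε • z := by
        rw [key]; funext i
        simp [Pi.smul_apply, smul_eq_mul]
      rw [h1, Matrix.mulVec_add, Matrix.mulVec_smul, hmove, hv]
      simp
    · refine ⟨z, hzB, ?_⟩
      rcases hε with rfl | rfl
      · left; rw [key]; funext i; simp [Pi.add_apply]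
      · right; rw [key]; funext i
        show natToInt v i + (-1) * z i = (natToInt v - z) i
        simp [Pi.sub_apply]; ring
  suffices H : ∀ n : ℕ, ∀ x ∈ fiberOf A t, ∀ y ∈ fiberOf A t,
      (∑ i, |natToInt x i - natToInt y i|) ≤ (n : ℤ) → Accessible B x y by
    intro x hx y hy
    exact H (∑ i, |natToInt x i - natToInt y i|).toNat x hx y hy (Int.self_le_toNat _)
  intro n
  induction n with
  | zero =>
    intro x hx y hy hle
    have hxy : x = y := by
      funext i
      have h0 : (∑ i, |natToInt x i - natToInt y i|) = 0 :=
        le_antisymm hle (Finset.sum_nonneg fun i _ => abs_nonneg _)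
      have := (Finset.sum_eq_zero_iff_of_nonneg
        (fun i _ => abs_nonneg (natToInt x i - natToInt y i))).mp h0 i (Finset.mem_univ i)
      have : natToInt x i = natToInt y i := by
        have := abs_eq_zero.mp this; linarith
      exact Nat.cast_injective this
    exact hxy ▸ Relation.ReflTransGen.refl
  | succ n ih =>
    intro x hx y hy hle
    by_cases hxy : x = y
    · exact hxy ▸ Relation.ReflTransGen.refl
    obtain ⟨z, hzB, ε, hε, hcase⟩ := hB t x hx y hy hxy
    rcases hcase with ⟨hnn, hlt⟩ | ⟨hnn, hlt⟩
    · obtain ⟨x', hx', hstep, hval⟩ := step z hzB ε hε x hx hnn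
      have hdist : (∑ i, |natToInt x' i - natToInt y i|) ≤ (n : ℤ) := by
        have : (∑ i, |natToInt x' i - natToInt y i|)
            = ∑ i, |natToInt x i + ε * z i - natToInt y i| := by
          apply Finset.sum_congr rfl; intro i _; rw [hval]
        rw [this]
        have := lt_of_lt_of_le hlt hle
        push_cast at this ⊢
        linarith
      exact Relation.ReflTransGen.head hstep (ih x' hx' y hy hdist)
    · obtain ⟨y', hy', hstep, hval⟩ := step z hzB ε hε y hy hnn
      have hdist : (∑ i, |natToInt x i - natToInt y' i|) ≤ (n : ℤ) := by
        have : (∑ i, |natToInt x i - natToInt y' i|)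
            = ∑ i, |natToInt x i - (natToInt y i + ε * z i)| := by
          apply Finset.sum_congr rfl; intro i _; rw [hval]
        rw [this]
        have := lt_of_lt_of_le hlt hle
        push_cast at this ⊢
        linarith
      have hsym : MStep B y' y := by
        obtain ⟨w, hwB, hw⟩ := hstep
        refine ⟨w, hwB, ?_⟩
        rcases hw with hw | hw
        · right; rw [hw]; funext i; simp
        · left; rw [hw]; funext i; simp
      exact Relation.ReflTransGen.tail (ih x hx y' hy' hdist) hsym
end

section
/- For the complete independence model of 2×2×2 contingency tables (p = 8 cells indexed by (i,j,k) ∈ {1,2}³, and A x = (Σ_{ijk} x_{ijk}, x_{1··}, x_{·1·}, x_{··1}) ∈ ℤ⁴), each of the following sixteen degree-2 frequency vectors is an indispensable monomial: e_{111}+e_{122}, e_{111}+e_{212}, e_{111}+e_{221}, e_{112}+e_{121}, e_{112}+e_{211}, e_{112}+e_{222}, e_{121}+e_{222}, e_{121}+e_{211}, e_{122}+e_{221}, e_{122}+e_{212}, e_{211}+e_{222}, e_{212}+e_{221}, e_{111}+e_{222}, e_{112}+e_{221}, e_{121}+e_{212}, e_{122}+e_{211}. -/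
open scoped BigOperators

/-- The matrix of the complete independence model of `2×2×2` contingency tables:
total, first one-dimensional marginal, second, third (rows: total, `i=1`, `j=1`,
`k=1`, with levels `{1,2}` coded by `Fin 2`). -/
def A222 : Matrix (Fin 4) (Fin 2 × Fin 2 × Fin 2) ℤ :=
  Matrix.of
    ![fun _ => 1,
      fun c => if c.1 = 0 then 1 else 0,
      fun c => if c.2.1 = 0 then 1 else 0,
      fun c => if c.2.2 = 0 then 1 else 0]

/-- The degree-2 frequency vector with one count in cell `c` and one in cell `c'`. -/
def twoCells (c c' : Fin 2 × Fin 2 × Fin 2) : Fin 2 × Fin 2 × Fin 2 → ℕ :=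
  Pi.single c 1 + Pi.single c' 1


set_option maxHeartbeats 1000000

section Aux

private lemma first_step222 {α : Type*} (r : α → α → Prop) (x y : α)
    (h : Relation.ReflTransGen r x y) :
    x = y ∨ ∃ b, b ≠ x ∧ r x b := by
  induction h using Relation.ReflTransGen.head_induction_on with
  | refl => exact Or.inl rfl
  | head hac _ ih =>
    rename_i a c _
    by_cases hca : c = a
    · subst hca; exact ih
    · exact Or.inr ⟨c, hca, hac⟩

set_option linter.unusedVariables false in
private lemma M222aux (B1 B2 B3 B4 B5 B6 B7 B8 X1 X2 X3 X4 X5 X6 X7 X8 : ℕ)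
    (hB : B1+B2+B3+B4+B5+B6+B7+B8 = 2) (hX : X1+X2+X3+X4+X5+X6+X7+X8 = 2)
    (m1 : B1+B2+B3+B4 = X1+X2+X3+X4) (m2 : B1+B2+B5+B6 = X1+X2+X5+X6)
    (m3 : B1+B3+B5+B7 = X1+X3+X5+X7)
    (s : 1 ≤ B1) (t : 1 ≤ X1) :
    B1 = X1 ∧ B2 = X2 ∧ B3 = X3 ∧ B4 = X4 ∧ B5 = X5 ∧ B6 = X6 ∧ B7 = X7 ∧ B8 = X8 := by
  refine ⟨?_, ?_, ?_, ?_, ?_, ?_, ?_, ?_⟩ <;> omega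

private lemma fin222 (Z : ℤ) (B X : ℕ) (h : (B:ℤ) = X + Z) (hx : X ≤ 1)
    (d : X = 1 → B = 0) : (-Z).toNat = X := by omega

set_option linter.unusedVariables false in
private lemma dicho222 (Z1 Z2 Z3 Z4 Z5 Z6 Z7 Z8 : ℤ)
    (B1 B2 B3 B4 B5 B6 B7 B8 X1 X2 X3 X4 X5 X6 X7 X8 : ℕ)
    (e0 : Z1+Z2+(Z3+Z4)+(Z5+Z6+(Z7+Z8)) = 0)
    (e1 : Z1+Z2+(Z3+Z4) = 0) (e2 : Z1+Z2+(Z5+Z6) = 0) (e3 : Z1+Z3+(Z5+Z7) = 0)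
    (h1 : (B1:ℤ) = X1 + Z1) (h2 : (B2:ℤ) = X2 + Z2) (h3 : (B3:ℤ) = X3 + Z3)
    (h4 : (B4:ℤ) = X4 + Z4) (h5 : (B5:ℤ) = X5 + Z5) (h6 : (B6:ℤ) = X6 + Z6)
    (h7 : (B7:ℤ) = X7 + Z7) (h8 : (B8:ℤ) = X8 + Z8)
    (hx1 : X1 ≤ 1) (hx2 : X2 ≤ 1) (hx3 : X3 ≤ 1) (hx4 : X4 ≤ 1)
    (hx5 : X5 ≤ 1) (hx6 : X6 ≤ 1) (hx7 : X7 ≤ 1) (hx8 : X8 ≤ 1)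
    (hsum : X1+X2+(X3+X4)+(X5+X6+(X7+X8)) = 2) :
    (B1 = X1 ∧ B2 = X2 ∧ B3 = X3 ∧ B4 = X4 ∧ B5 = X5 ∧ B6 = X6 ∧ B7 = X7 ∧ B8 = X8) ∨
    ((X1 = 1 → B1 = 0) ∧ (X2 = 1 → B2 = 0) ∧ (X3 = 1 → B3 = 0) ∧ (X4 = 1 → B4 = 0) ∧
     (X5 = 1 → B5 = 0) ∧ (X6 = 1 → B6 = 0) ∧ (X7 = 1 → B7 = 0) ∧ (X8 = 1 → B8 = 0)) := by
  have F0B : B1+B2+B3+B4+B5+B6+B7+B8 = 2 := by omega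
  have F0X : X1+X2+X3+X4+X5+X6+X7+X8 = 2 := by omega
  have F1 : B1+B2+B3+B4 = X1+X2+X3+X4 := by omega
  have F2 : B1+B2+B5+B6 = X1+X2+X5+X6 := by omega
  have F3 : B1+B3+B5+B7 = X1+X3+X5+X7 := by omega
  have d1 : X1 = 1 → B1 ≠ 0 →
      B1 = X1 ∧ B2 = X2 ∧ B3 = X3 ∧ B4 = X4 ∧ B5 = X5 ∧ B6 = X6 ∧ B7 = X7 ∧ B8 = X8 := by
    intro hX hB
    exact M222aux B1 B2 B3 B4 B5 B6 B7 B8 X1 X2 X3 X4 X5 X6 X7 X8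
      F0B F0X F1 F2 F3 (by omega) (by omega)
  have d2 : X2 = 1 → B2 ≠ 0 →
      B1 = X1 ∧ B2 = X2 ∧ B3 = X3 ∧ B4 = X4 ∧ B5 = X5 ∧ B6 = X6 ∧ B7 = X7 ∧ B8 = X8 := by
    intro hX hB
    obtain ⟨q2,q1,q4,q3,q6,q5,q8,q7⟩ :=
      M222aux B2 B1 B4 B3 B6 B5 B8 B7 X2 X1 X4 X3 X6 X5 X8 X7
        (by omega) (by omega) (by omega) (by omega) (by omega) (by omega) (by omega)
    exact ⟨q1,q2,q3,q4,q5,q6,q7,q8⟩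
  have d3 : X3 = 1 → B3 ≠ 0 →
      B1 = X1 ∧ B2 = X2 ∧ B3 = X3 ∧ B4 = X4 ∧ B5 = X5 ∧ B6 = X6 ∧ B7 = X7 ∧ B8 = X8 := by
    intro hX hB
    obtain ⟨q3,q4,q1,q2,q7,q8,q5,q6⟩ :=
      M222aux B3 B4 B1 B2 B7 B8 B5 B6 X3 X4 X1 X2 X7 X8 X5 X6
        (by omega) (by omega) (by omega) (by omega) (by omega) (by omega) (by omega)
    exact ⟨q1,q2,q3,q4,q5,q6,q7,q8⟩
  have d4 : X4 = 1 → B4 ≠ 0 →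
      B1 = X1 ∧ B2 = X2 ∧ B3 = X3 ∧ B4 = X4 ∧ B5 = X5 ∧ B6 = X6 ∧ B7 = X7 ∧ B8 = X8 := by
    intro hX hB
    obtain ⟨q4,q3,q2,q1,q8,q7,q6,q5⟩ :=
      M222aux B4 B3 B2 B1 B8 B7 B6 B5 X4 X3 X2 X1 X8 X7 X6 X5
        (by omega) (by omega) (by omega) (by omega) (by omega) (by omega) (by omega)
    exact ⟨q1,q2,q3,q4,q5,q6,q7,q8⟩
  have d5 : X5 = 1 → B5 ≠ 0 →
      B1 = X1 ∧ B2 = X2 ∧ B3 = X3 ∧ B4 = X4 ∧ B5 = X5 ∧ B6 = X6 ∧ B7 = X7 ∧ B8 = X8 := by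
    intro hX hB
    obtain ⟨q5,q6,q7,q8,q1,q2,q3,q4⟩ :=
      M222aux B5 B6 B7 B8 B1 B2 B3 B4 X5 X6 X7 X8 X1 X2 X3 X4
        (by omega) (by omega) (by omega) (by omega) (by omega) (by omega) (by omega)
    exact ⟨q1,q2,q3,q4,q5,q6,q7,q8⟩
  have d6 : X6 = 1 → B6 ≠ 0 →
      B1 = X1 ∧ B2 = X2 ∧ B3 = X3 ∧ B4 = X4 ∧ B5 = X5 ∧ B6 = X6 ∧ B7 = X7 ∧ B8 = X8 := by
    intro hX hB
    obtain ⟨q6,q5,q8,q7,q2,q1,q4,q3⟩ :=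
      M222aux B6 B5 B8 B7 B2 B1 B4 B3 X6 X5 X8 X7 X2 X1 X4 X3
        (by omega) (by omega) (by omega) (by omega) (by omega) (by omega) (by omega)
    exact ⟨q1,q2,q3,q4,q5,q6,q7,q8⟩
  have d7 : X7 = 1 → B7 ≠ 0 →
      B1 = X1 ∧ B2 = X2 ∧ B3 = X3 ∧ B4 = X4 ∧ B5 = X5 ∧ B6 = X6 ∧ B7 = X7 ∧ B8 = X8 := by
    intro hX hB
    obtain ⟨q7,q8,q5,q6,q3,q4,q1,q2⟩ :=
      M222aux B7 B8 B5 B6 B3 B4 B1 B2 X7 X8 X5 X6 X3 X4 X1 X2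
        (by omega) (by omega) (by omega) (by omega) (by omega) (by omega) (by omega)
    exact ⟨q1,q2,q3,q4,q5,q6,q7,q8⟩
  have d8 : X8 = 1 → B8 ≠ 0 →
      B1 = X1 ∧ B2 = X2 ∧ B3 = X3 ∧ B4 = X4 ∧ B5 = X5 ∧ B6 = X6 ∧ B7 = X7 ∧ B8 = X8 := by
    intro hX hB
    obtain ⟨q8,q7,q6,q5,q4,q3,q2,q1⟩ :=
      M222aux B8 B7 B6 B5 B4 B3 B2 B1 X8 X7 X6 X5 X4 X3 X2 X1
        (by omega) (by omega) (by omega) (by omega) (by omega) (by omega) (by omega)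
    exact ⟨q1,q2,q3,q4,q5,q6,q7,q8⟩
  by_cases c1 : X1 = 1 ∧ B1 ≠ 0
  · exact Or.inl (d1 c1.1 c1.2)
  by_cases c2 : X2 = 1 ∧ B2 ≠ 0
  · exact Or.inl (d2 c2.1 c2.2)
  by_cases c3 : X3 = 1 ∧ B3 ≠ 0
  · exact Or.inl (d3 c3.1 c3.2)
  by_cases c4 : X4 = 1 ∧ B4 ≠ 0
  · exact Or.inl (d4 c4.1 c4.2)
  by_cases c5 : X5 = 1 ∧ B5 ≠ 0
  · exact Or.inl (d5 c5.1 c5.2)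
  by_cases c6 : X6 = 1 ∧ B6 ≠ 0
  · exact Or.inl (d6 c6.1 c6.2)
  by_cases c7 : X7 = 1 ∧ B7 ≠ 0
  · exact Or.inl (d7 c7.1 c7.2)
  by_cases c8 : X8 = 1 ∧ B8 ≠ 0
  · exact Or.inl (d8 c8.1 c8.2)
  refine Or.inr ⟨?_, ?_, ?_, ?_, ?_, ?_, ?_, ?_⟩
  · exact fun hX => Classical.byContradiction fun hB => c1 ⟨hX, hB⟩
  · exact fun hX => Classical.byContradiction fun hB => c2 ⟨hX, hB⟩
  · exact fun hX => Classical.byContradiction fun hB => c3 ⟨hX, hB⟩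
  · exact fun hX => Classical.byContradiction fun hB => c4 ⟨hX, hB⟩
  · exact fun hX => Classical.byContradiction fun hB => c5 ⟨hX, hB⟩
  · exact fun hX => Classical.byContradiction fun hB => c6 ⟨hX, hB⟩
  · exact fun hX => Classical.byContradiction fun hB => c7 ⟨hX, hB⟩
  · exact fun hX => Classical.byContradiction fun hB => c8 ⟨hX, hB⟩

private lemma core222 (x b : Fin 2 × Fin 2 × Fin 2 → ℕ) (z : Fin 2 × Fin 2 × Fin 2 → ℤ)
    (hz : A222.mulVec z = 0)
    (hb : natToInt b = natToInt x + z)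
    (hbx : b ≠ x)
    (hx1 : ∀ i, x i ≤ 1) (hsum : ∑ i, x i = 2) : negOf z = x := by
  have e0 : z (0,0,0) + z (0,0,1) + (z (0,1,0) + z (0,1,1)) +
      (z (1,0,0) + z (1,0,1) + (z (1,1,0) + z (1,1,1))) = 0 := by
    simpa [A222, Matrix.mulVec, dotProduct, Fintype.sum_prod_type, Fin.sum_univ_two,
      -Prod.mk_zero_zero, -Prod.mk_one_one] using congrFun hz 0
  have e1 : z (0,0,0) + z (0,0,1) + (z (0,1,0) + z (0,1,1)) = 0 := by
    simpa [A222, Matrix.mulVec, dotProduct, Fintype.sum_prod_type, Fin.sum_univ_two,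
      -Prod.mk_zero_zero, -Prod.mk_one_one] using congrFun hz 1
  have e2 : z (0,0,0) + z (0,0,1) + (z (1,0,0) + z (1,0,1)) = 0 := by
    simpa [A222, Matrix.mulVec, dotProduct, Fintype.sum_prod_type, Fin.sum_univ_two,
      -Prod.mk_zero_zero, -Prod.mk_one_one] using congrFun hz 2
  have e3 : z (0,0,0) + z (0,1,0) + (z (1,0,0) + z (1,1,0)) = 0 := by
    simpa [A222, Matrix.mulVec, dotProduct, Fintype.sum_prod_type, Fin.sum_univ_two,
      -Prod.mk_zero_zero, -Prod.mk_one_one] using congrFun hz 3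
  have hsum' : x (0,0,0) + x (0,0,1) + (x (0,1,0) + x (0,1,1)) +
      (x (1,0,0) + x (1,0,1) + (x (1,1,0) + x (1,1,1))) = 2 := by
    simpa [Fintype.sum_prod_type, Fin.sum_univ_two, -Prod.mk_zero_zero, -Prod.mk_one_one]
      using hsum
  have hb000 := congrFun hb (0,0,0)
  have hb001 := congrFun hb (0,0,1)
  have hb010 := congrFun hb (0,1,0)
  have hb011 := congrFun hb (0,1,1)
  have hb100 := congrFun hb (1,0,0)
  have hb101 := congrFun hb (1,0,1)
  have hb110 := congrFun hb (1,1,0)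
  have hb111 := congrFun hb (1,1,1)
  simp only [natToInt, Pi.add_apply] at hb000 hb001 hb010 hb011 hb100 hb101 hb110 hb111
  obtain hall | hd := dicho222 (z (0,0,0)) (z (0,0,1)) (z (0,1,0)) (z (0,1,1))
    (z (1,0,0)) (z (1,0,1)) (z (1,1,0)) (z (1,1,1))
    (b (0,0,0)) (b (0,0,1)) (b (0,1,0)) (b (0,1,1))
    (b (1,0,0)) (b (1,0,1)) (b (1,1,0)) (b (1,1,1))
    (x (0,0,0)) (x (0,0,1)) (x (0,1,0)) (x (0,1,1))
    (x (1,0,0)) (x (1,0,1)) (x (1,1,0)) (x (1,1,1))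
    e0 e1 e2 e3 hb000 hb001 hb010 hb011 hb100 hb101 hb110 hb111
    (hx1 (0,0,0)) (hx1 (0,0,1)) (hx1 (0,1,0)) (hx1 (0,1,1))
    (hx1 (1,0,0)) (hx1 (1,0,1)) (hx1 (1,1,0)) (hx1 (1,1,1)) hsum'
  · exfalso
    obtain ⟨q1,q2,q3,q4,q5,q6,q7,q8⟩ := hall
    apply hbx
    funext c
    obtain ⟨i, j, k⟩ := c
    fin_cases i <;> fin_cases j <;> fin_cases k
    · exact q1
    · exact q2
    · exact q3
    · exact q4
    · exact q5
    · exact q6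
    · exact q7
    · exact q8
  · obtain ⟨d1,d2,d3,d4,d5,d6,d7,d8⟩ := hd
    funext c
    obtain ⟨i, j, k⟩ := c
    fin_cases i <;> fin_cases j <;> fin_cases k
    · exact fin222 _ _ _ hb000 (hx1 (0,0,0)) d1
    · exact fin222 _ _ _ hb001 (hx1 (0,0,1)) d2
    · exact fin222 _ _ _ hb010 (hx1 (0,1,0)) d3
    · exact fin222 _ _ _ hb011 (hx1 (0,1,1)) d4
    · exact fin222 _ _ _ hb100 (hx1 (1,0,0)) d5
    · exact fin222 _ _ _ hb101 (hx1 (1,0,1)) d6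
    · exact fin222 _ _ _ hb110 (hx1 (1,1,0)) d7
    · exact fin222 _ _ _ hb111 (hx1 (1,1,1)) d8

private lemma key222 (x y : Fin 2 × Fin 2 × Fin 2 → ℕ)
    (hx1 : ∀ i, x i ≤ 1) (hsum : ∑ i, x i = 2) (hne : y ≠ x)
    (hfib : A222.mulVec (natToInt y) = A222.mulVec (natToInt x)) :
    IsIndispensableMonomial A222 x := by
  intro B hB
  obtain ⟨hfin, hmv, hacc⟩ := hB
  have hxy : Accessible B x y :=
    hacc (A222.mulVec (natToInt x)) x rfl y hfib
  obtain heq | ⟨b, hbne, hstep⟩ := first_step222 (MStep B) x y hxy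
  · exact absurd heq.symm hne
  · obtain ⟨z, hzB, hcase | hcase⟩ := hstep
    · exact ⟨z, hzB, Or.inr (core222 x b z (hmv z hzB) hcase hbne hx1 hsum)⟩
    · refine ⟨z, hzB, Or.inl ?_⟩
      have hz' : A222.mulVec (-z) = 0 := by
        have := hmv z hzB
        rw [Matrix.mulVec_neg, this, neg_zero]
      have hcase' : natToInt b = natToInt x + (-z) := by
        rw [hcase, sub_eq_add_neg]
      have hres := core222 x b (-z) hz' hcase' hbne hx1 hsum
      rw [← hres]
      funext i
      simp [posOf, negOf]

end Aux

/-- the sixteen listed degree-2 frequency vectors are indispensable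
monomials of the complete independence model of `2×2×2` tables. -/
theorem indispensable_monomials_222 :
    IsIndispensableMonomial A222 (twoCells (0,0,0) (0,1,1)) ∧
    IsIndispensableMonomial A222 (twoCells (0,0,0) (1,0,1)) ∧
    IsIndispensableMonomial A222 (twoCells (0,0,0) (1,1,0)) ∧
    IsIndispensableMonomial A222 (twoCells (0,0,1) (0,1,0)) ∧
    IsIndispensableMonomial A222 (twoCells (0,0,1) (1,0,0)) ∧
    IsIndispensableMonomial A222 (twoCells (0,0,1) (1,1,1)) ∧
    IsIndispensableMonomial A222 (twoCells (0,1,0) (1,1,1)) ∧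
    IsIndispensableMonomial A222 (twoCells (0,1,0) (1,0,0)) ∧
    IsIndispensableMonomial A222 (twoCells (0,1,1) (1,1,0)) ∧
    IsIndispensableMonomial A222 (twoCells (0,1,1) (1,0,1)) ∧
    IsIndispensableMonomial A222 (twoCells (1,0,0) (1,1,1)) ∧
    IsIndispensableMonomial A222 (twoCells (1,0,1) (1,1,0)) ∧
    IsIndispensableMonomial A222 (twoCells (0,0,0) (1,1,1)) ∧
    IsIndispensableMonomial A222 (twoCells (0,0,1) (1,1,0)) ∧
    IsIndispensableMonomial A222 (twoCells (0,1,0) (1,0,1)) ∧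
    IsIndispensableMonomial A222 (twoCells (0,1,1) (1,0,0)) := by
  refine ⟨?_, ?_, ?_, ?_, ?_, ?_, ?_, ?_, ?_, ?_, ?_, ?_, ?_, ?_, ?_, ?_⟩
  · exact key222 _ (twoCells (0,0,1) (0,1,0)) (by decide) (by decide) (by decide) (by decide)
  · exact key222 _ (twoCells (0,0,1) (1,0,0)) (by decide) (by decide) (by decide) (by decide)
  · exact key222 _ (twoCells (0,1,0) (1,0,0)) (by decide) (by decide) (by decide) (by decide)
  · exact key222 _ (twoCells (0,0,0) (0,1,1)) (by decide) (by decide) (by decide) (by decide)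
  · exact key222 _ (twoCells (0,0,0) (1,0,1)) (by decide) (by decide) (by decide) (by decide)
  · exact key222 _ (twoCells (0,1,1) (1,0,1)) (by decide) (by decide) (by decide) (by decide)
  · exact key222 _ (twoCells (0,1,1) (1,1,0)) (by decide) (by decide) (by decide) (by decide)
  · exact key222 _ (twoCells (0,0,0) (1,1,0)) (by decide) (by decide) (by decide) (by decide)
  · exact key222 _ (twoCells (0,1,0) (1,1,1)) (by decide) (by decide) (by decide) (by decide)
  · exact key222 _ (twoCells (0,0,1) (1,1,1)) (by decide) (by decide) (by decide) (by decide)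
  · exact key222 _ (twoCells (1,0,1) (1,1,0)) (by decide) (by decide) (by decide) (by decide)
  · exact key222 _ (twoCells (1,0,0) (1,1,1)) (by decide) (by decide) (by decide) (by decide)
  · exact key222 _ (twoCells (0,0,1) (1,1,0)) (by decide) (by decide) (by decide) (by decide)
  · exact key222 _ (twoCells (0,0,0) (1,1,1)) (by decide) (by decide) (by decide) (by decide)
  · exact key222 _ (twoCells (0,1,1) (1,0,0)) (by decide) (by decide) (by decide) (by decide)
  · exact key222 _ (twoCells (0,1,0) (1,0,1)) (by decide) (by decide) (by decide) (by decide)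
end
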